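/- Let 𝒜 be a prestack on a small category 𝒰 and σ = (u_1, …, u_n) an n-simplex in the nerve of 𝒰. For any two paths r = (r_1,…,r_{n−1}) and s = (s_1,…,s_{n−1}) in 𝒫(u_1,…,u_n), the composite natural transformations agree: ‖r‖ = r_1 r_2 ⋯ r_{n−1} = s_1 s_2 ⋯ s_{n−1} = ‖s‖. -/

import Mathlib

open CategoryTheory

universe w₁ w₂ v₁ u₁ u₂

/-- A prestack on a small category `𝒰`, with values in `k`-linear categories. The family of
categories is given by `A` together with its category/preadditive/linear instances; the prestack
structure records the restriction functors, their strict unitality, and the coherent twist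
isomorphisms `c^{u,v} : v^* u^* ≅ (uv)^*`. -/
structure Prestack (k : Type u₁) [CommRing k] (𝒰 : Type u₂) [Category.{v₁} 𝒰]
    (A : 𝒰 → Type w₁) [∀ U, Category.{w₂} (A U)] [∀ U, Preadditive (A U)]
    [∀ U, Linear k (A U)] where
  /-- restriction functor `u^* : A(U) ⥤ A(V)` for `u : V ⟶ U` -/
  res : ∀ {V U : 𝒰}, (V ⟶ U) → (A U ⥤ A V)
  res_id : ∀ U : 𝒰, res (𝟙 U) = 𝟭 (A U)
  resAdditive : ∀ {V U : 𝒰} (u : V ⟶ U), (res u).Additive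
  resLinear : ∀ {V U : 𝒰} (u : V ⟶ U), letI := resAdditive u; (res u).Linear k
  /-- the twist `c^{u,v} : v^* u^* ≅ (uv)^*`; here for `v : W ⟶ V`, `u : V ⟶ U`,
  `twist v u : res u ⋙ res v ≅ res (v ≫ u)`. -/
  twist : ∀ {W V U : 𝒰} (v : W ⟶ V) (u : V ⟶ U), res u ⋙ res v ≅ res (v ≫ u)
  twist_id_left : ∀ {V U : 𝒰} (u : V ⟶ U),
    twist (𝟙 V) u = eqToIso (by rw [res_id, Functor.comp_id, Category.id_comp])
  twist_id_right : ∀ {W V : 𝒰} (v : W ⟶ V),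
    twist v (𝟙 V) = eqToIso (by rw [res_id, Functor.id_comp, Category.comp_id])
  coherence : ∀ {T W V U : 𝒰} (w : T ⟶ W) (v : W ⟶ V) (u : V ⟶ U),
    CategoryTheory.Functor.whiskerLeft (res u) (twist w v).hom ≫ (twist (w ≫ v) u).hom =
      CategoryTheory.Functor.whiskerRight (twist v u).hom (res w) ≫ (twist w (v ≫ u)).hom ≫
        eqToHom (by rw [Category.assoc])

/-- Composable chains of morphisms in a category; `Chain C S T n` is the type of
`n`-simplices in the nerve of `C` from `S` to `T`. -/
inductive Chain (C : Type u₂) [Category.{v₁} C] : C → C → ℕ → Type (max u₂ v₁)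
  | nil (U : C) : Chain C U U 0
  | cons {S M T : C} {n : ℕ} (u : S ⟶ M) (σ : Chain C M T n) : Chain C S T (n + 1)

namespace Chain

variable {C : Type u₂} [Category.{v₁} C]

/-- the composite of a chain -/
def comp : ∀ {S T : C} {n : ℕ}, Chain C S T n → (S ⟶ T)
  | _, _, _, .nil U => 𝟙 U
  | _, _, _, .cons u (.nil _) => u
  | _, _, _, .cons u (.cons v σ) => u ≫ (Chain.cons v σ).comp

/-- cast a chain along an equality of lengths -/
def cast' {S T : C} {n m : ℕ} (h : n = m) (σ : Chain C S T n) : Chain C S T m := h ▸ σ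

@[simp] theorem comp_cast' {S T : C} {n m : ℕ} (h : n = m) (σ : Chain C S T n) :
    (σ.cast' h).comp = σ.comp := by subst h; rfl

theorem comp_cons' {S M T : C} {n : ℕ} (u : S ⟶ M) (σ : Chain C M T n) :
    (Chain.cons u σ).comp = u ≫ σ.comp := by
  cases σ <;> simp [comp]

/-- composing two adjacent maps in a chain (at position `i`, counted from the source) -/
def del : ∀ {S T : C} {n : ℕ}, Chain C S T (n + 2) → ℕ → Chain C S T (n + 1)
  | _, _, _, .cons u (.cons v (.nil _)), _ => .cons (u ≫ v) (.nil _)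
  | _, _, _, .cons u (.cons v (.cons w σ)), 0 => .cons (u ≫ v) (.cons w σ)
  | _, _, _, .cons u (.cons v (.cons w σ)), (i + 1) => .cons u (del (.cons v (.cons w σ)) i)

theorem comp_del : ∀ {S T : C} {n : ℕ} (σ : Chain C S T (n + 2)) (i : ℕ),
    (σ.del i).comp = σ.comp
  | _, _, _, .cons u (.cons v (.nil _)), _ => by simp [del, comp]
  | _, _, _, .cons u (.cons v (.cons w σ)), 0 => by
      simp [del, comp, comp_cons', Category.assoc]
  | _, _, _, .cons u (.cons v (.cons w σ)), (i + 1) => by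
      have := comp_del (.cons v (.cons w σ)) i
      simp only [del, comp_cons'] at *
      rw [this]

/-- append two chains -/
def append : ∀ {S M T : C} {n m : ℕ}, Chain C S M n → Chain C M T m → Chain C S T (n + m)
  | _, _, _, _, m, .nil _, τ => Chain.cast' (by omega) τ
  | _, _, _, _, _, .cons u σ, τ => Chain.cast' (by omega) (Chain.cons u (append σ τ))

/-- append a morphism at the target end of a chain -/
def snoc : ∀ {S M T : C} {n : ℕ}, Chain C S M n → (M ⟶ T) → Chain C S T (n + 1)
  | _, _, _, _, .nil _, f => .cons f (.nil _)
  | _, _, _, _, .cons u σ, f => .cons u (snoc σ f)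

/-- the image of a chain under a functor -/
def mapC {D : Type u₁} [Category.{w₁} D] (F : C ⥤ D) :
    ∀ {S T : C} {n : ℕ}, Chain C S T n → Chain D (F.obj S) (F.obj T) n
  | _, _, _, .nil U => .nil (F.obj U)
  | _, _, _, .cons u σ => .cons (F.map u) (mapC F σ)

/-- a chain contains an identity morphism -/
def HasId : ∀ {S T : C} {n : ℕ}, Chain C S T n → Prop
  | _, _, _, .nil _ => False
  | S, _, _, .cons (M := M) u σ => (∃ h : S = M, HEq u (𝟙 S)) ∨ σ.HasId

/-- a chain (of length `n`) is right `kk`-degenerate: it has an identity among its last `kk`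
entries, i.e. `u_i = 1` for some `n - kk + 1 ≤ i ≤ n` -/
def RightDeg : ∀ {S T : C} {n : ℕ}, Chain C S T n → ℕ → Prop
  | _, _, _, .nil _, _ => False
  | S, _, n + 1, .cons (M := M) u σ, kk => ((n + 1 ≤ kk) ∧ ∃ h : S = M, HEq u (𝟙 S)) ∨ σ.RightDeg kk

end Chain
section CoreB

open CategoryTheory

variable {k : Type u₁} [CommRing k] {𝒰 : Type u₂} [Category.{v₁} 𝒰]
  {A : 𝒰 → Type w₁} [∀ U, Category.{w₂} (A U)] [∀ U, Preadditive (A U)]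
  [∀ U, Linear k (A U)]

namespace Chain

variable (𝒜 : Prestack k 𝒰 A)

/-- `σ^⋆ = u_1^* u_2^* ⋯ u_p^*` -/
def star : ∀ {S T : 𝒰} {n : ℕ}, Chain 𝒰 S T n → (A T ⥤ A S)
  | _, _, _, .nil U => 𝟭 (A U)
  | _, _, _, .cons u σ => star σ ⋙ 𝒜.res u

/-- `σ^* = (u_p ⋯ u_2 u_1)^*` -/
def ast : ∀ {S T : 𝒰} {n : ℕ}, Chain 𝒰 S T n → (A T ⥤ A S)
  | _, _, _, .nil U => 𝟭 (A U)
  | _, _, _, .cons u σ => 𝒜.res (Chain.cons u σ).comp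

theorem res_comp_eq_ast : ∀ {S T : 𝒰} {n : ℕ} (σ : Chain 𝒰 S T n), 𝒜.res σ.comp = σ.ast 𝒜
  | _, _, _, .nil U => by simp [Chain.comp, Chain.ast, 𝒜.res_id]
  | _, _, _, .cons u σ => rfl

@[simp] theorem star_cast' {S T : 𝒰} {n m : ℕ} (h : n = m) (σ : Chain 𝒰 S T n) :
    (σ.cast' h).star 𝒜 = σ.star 𝒜 := by subst h; rfl

@[simp] theorem ast_cast' {S T : 𝒰} {n m : ℕ} (h : n = m) (σ : Chain 𝒰 S T n) :
    (σ.cast' h).ast 𝒜 = σ.ast 𝒜 := by subst h; rfl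

/-- the natural transformation `ε^{σ,i} : σ^⋆ ⟶ (∂_i σ)^⋆` obtained by twisting the
maps at positions `i, i+1` of `σ` (0-indexed from the source). -/
def eps : ∀ {S T : 𝒰} {n : ℕ} (σ : Chain 𝒰 S T (n + 2)) (i : ℕ),
    (σ.star 𝒜 ⟶ (σ.del i).star 𝒜)
  | _, _, _, .cons u (.cons v (.nil _)), _ => (𝒜.twist u v).hom
  | _, _, _, .cons u (.cons v (.cons w σ)), 0 =>
      CategoryTheory.Functor.whiskerLeft ((Chain.cons w σ).star 𝒜) (𝒜.twist u v).hom
  | _, _, _, .cons u (.cons v (.cons w σ)), (i + 1) =>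
      CategoryTheory.Functor.whiskerRight (eps (.cons v (.cons w σ)) i) (𝒜.res u)

end Chain

/-- The type of (formal) paths from `σ^⋆` to `σ^*`, for a simplex `σ` in the nerve of `𝒰`,
in the sense of Dinh Van–Lowen: a path of a 1-simplex is empty; the unique path of a
2-simplex is the twist `c^{u_1,u_2}`; a path of an `n`-simplex (`n ≥ 3`) is a path of some
`∂_i σ` together with the natural transformation `ε^{σ,i}`. -/
inductive PathD : ∀ {S T : 𝒰} {n : ℕ}, Chain 𝒰 S T (n + 1) → Type (max u₂ v₁)
  | one {S T : 𝒰} (σ : Chain 𝒰 S T 1) : PathD σ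
  | base {S T : 𝒰} (σ : Chain 𝒰 S T 2) : PathD σ
  | step {S T : 𝒰} {n : ℕ} (σ : Chain 𝒰 S T (n + 3)) (i : Fin (n + 2))
      (r : PathD (σ.del i.val)) : PathD σ

namespace PathD

/-- the sign of a path -/
def sign : ∀ {S T : 𝒰} {n : ℕ} {σ : Chain 𝒰 S T (n + 1)}, PathD σ → ℤ
  | _, _, _, _, .one _ => 1
  | _, _, _, _, .base _ => -1
  | _, _, _, _, .step _ i r => (-1) ^ (i.val + 1) * r.sign

variable (𝒜 : Prestack k 𝒰 A)

/-- the underlying composable sequence of natural transformations of a path, starting at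
`σ^⋆`, together with its endpoint (which is propositionally equal to `σ^*`). -/
def toNT : ∀ {S T : 𝒰} {n : ℕ} {σ : Chain 𝒰 S T (n + 1)}, PathD σ →
    Σ G : A T ⥤ A S, Chain (A T ⥤ A S) (σ.star 𝒜) G n
  | _, _, _, _, .one σ => ⟨σ.star 𝒜, .nil _⟩
  | _, _, _, _, .base (.cons u (.cons v (.nil _))) =>
      ⟨𝒜.res (u ≫ v), .cons (𝒜.twist u v).hom (.nil _)⟩
  | _, _, _, _, .step σ i r => ⟨(toNT r).1, .cons (σ.eps 𝒜 i.val) (toNT r).2⟩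

/-- the list of all paths of a given simplex -/
def all : ∀ {S T : 𝒰} {n : ℕ} (σ : Chain 𝒰 S T (n + 1)), List (PathD σ)
  | _, _, 0, σ => [.one σ]
  | _, _, 1, σ => [.base σ]
  | _, _, (n + 2), σ =>
      (List.finRange (n + 2)).flatMap (fun i => (all (σ.del i.val)).map (PathD.step σ i))

end PathD

end CoreB
section CoreC

open CategoryTheory

/-- An `(m,l)`-shuffle permutation, encoded as a word: `left` advances the first strand (with `m`
entries), `right` advances the second strand (with `l` entries). -/
inductive Shuffle : ℕ → ℕ → Type
  | nil : Shuffle 0 0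
  | left {m l : ℕ} (s : Shuffle m l) : Shuffle (m + 1) l
  | right {m l : ℕ} (s : Shuffle m l) : Shuffle m (l + 1)

namespace Shuffle

/-- the sign of a shuffle permutation -/
def sign : ∀ {m l : ℕ}, Shuffle m l → ℤ
  | _, _, .nil => 1
  | _, _, .left s => s.sign
  | _, _, .right (m := m) s => (-1) ^ m * s.sign

/-- all `(m,l)`-shuffles -/
def all : ∀ m l : ℕ, List (Shuffle m l)
  | 0, 0 => [.nil]
  | m + 1, 0 => (all m 0).map .left
  | 0, l + 1 => (all 0 l).map .right
  | m + 1, l + 1 => ((all m (l + 1)).map .left) ++ ((all (m + 1) l).map .right)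

end Shuffle

variable {C D E : Type*} [Category C] [Category D] [Category E]

/-- The shuffle product, with respect to evaluation of functors, of a simplex `a` in `C` and a
simplex `ρ` of natural transformations in `C ⥤ D`: a `left` step applies the current functor to
the next morphism of `a`, a `right` step evaluates the next natural transformation of `ρ` at the
current object. -/
def shEval : ∀ {m l : ℕ}, Shuffle m l → ∀ {X B : C} {F G : C ⥤ D},
    Chain C X B m → Chain (C ⥤ D) F G l → Chain D (F.obj X) (G.obj B) (m + l)
  | _, _, .nil, _, _, _, _, .nil _, .nil _ => .nil _
  | _, _, .left s, _, _, F, _, .cons f a, ρ =>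
      Chain.cast' (by omega) (Chain.cons (F.map f) (shEval s a ρ))
  | _, _, .right s, X, _, _, _, a, .cons η ρ =>
      Chain.cast' (by omega) (Chain.cons (η.app X) (shEval s a ρ))

/-- The shuffle product, with respect to composition of functors, of a simplex `ρ` of natural
transformations in `C ⥤ D` (inner) and a simplex `τ` of natural transformations in `D ⥤ E`
(outer): steps are whiskered with the current functor on the other side. -/
def shComp : ∀ {m l : ℕ}, Shuffle m l → ∀ {F F' : C ⥤ D} {G G' : D ⥤ E},
    Chain (C ⥤ D) F F' m → Chain (D ⥤ E) G G' l →
      Chain (C ⥤ E) (F ⋙ G) (F' ⋙ G') (m + l)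
  | _, _, .nil, _, _, _, _, .nil _, .nil _ => .nil _
  | _, _, .left s, _, _, G, _, .cons η ρ, τ =>
      Chain.cast' (by omega) (Chain.cons (CategoryTheory.Functor.whiskerRight η G) (shComp s ρ τ))
  | _, _, .right s, F, _, _, _, ρ, .cons θ τ =>
      Chain.cast' (by omega) (Chain.cons (CategoryTheory.Functor.whiskerLeft F θ) (shComp s ρ τ))

end CoreC
section CoreD

open CategoryTheory

variable {k : Type u₁} [CommRing k] {𝒰 : Type u₂} [Category.{v₁} 𝒰]
  {A : 𝒰 → Type w₁} [∀ U, Category.{w₂} (A U)] [∀ U, Preadditive (A U)]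
  [∀ U, Linear k (A U)]

namespace Chain

variable {C : Type u₂} [Category.{v₁} C]

/-- split off the last morphism of a chain -/
def initLast : ∀ {S T : C} {n : ℕ}, Chain C S T (n + 1) → Σ M : C, Chain C S M n × (M ⟶ T)
  | _, _, _, .cons u (.nil _) => ⟨_, .nil _, u⟩
  | _, _, _, .cons u (.cons v σ) =>
      let x := (Chain.cons v σ).initLast; ⟨x.1, .cons u x.2.1, x.2.2⟩

variable (𝒜 : Prestack k 𝒰 A)

theorem ast_del {S T : 𝒰} {n : ℕ} (σ : Chain 𝒰 S T (n + 2)) (i : ℕ) :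
    (σ.del i).ast 𝒜 = σ.ast 𝒜 := by
  rw [← res_comp_eq_ast, ← res_comp_eq_ast, comp_del]

theorem star_init : ∀ {S T : 𝒰} {n : ℕ} (σ : Chain 𝒰 S T (n + 1)),
    σ.star 𝒜 = 𝒜.res σ.initLast.2.2 ⋙ σ.initLast.2.1.star 𝒜
  | _, _, _, .cons u (.nil _) => rfl
  | _, _, _, .cons u (.cons v σ) => by
      have := star_init (Chain.cons v σ)
      simp only [initLast, star] at this ⊢
      rw [this, Functor.assoc]
      rfl

theorem comp_init : ∀ {S T : C} {n : ℕ} (σ : Chain C S T (n + 1)),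
    σ.initLast.2.1.comp ≫ σ.initLast.2.2 = σ.comp
  | _, _, _, .cons u (.nil _) => by simp [initLast, comp]; exact Category.id_comp u
  | _, _, _, .cons u (.cons v σ) => by
      have := comp_init (Chain.cons v σ)
      simp only [initLast, comp_cons'] at this ⊢
      show (Chain.cons u (Chain.cons v σ).initLast.2.1).comp ≫ (Chain.cons v σ).initLast.2.2 = _
      rw [← this, comp_cons', Category.assoc]

end Chain

theorem PathD.end_eq (𝒜 : Prestack k 𝒰 A) :
    ∀ {S T : 𝒰} {n : ℕ} {σ : Chain 𝒰 S T (n + 1)} (r : PathD σ),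
      (r.toNT 𝒜).1 = 𝒜.res σ.comp
  | _, _, _, _, .one (.cons u (.nil _)) => rfl
  | _, _, _, _, .base (.cons u (.cons v (.nil _))) => rfl
  | _, _, _, _, .step σ i r => by
      rw [show ((PathD.step σ i r).toNT 𝒜).1 = (r.toNT 𝒜).1 from rfl, PathD.end_eq 𝒜 r,
        Chain.comp_del]

/-- A bimodule over a prestack `𝒜`. -/
structure Bimodule (𝒜 : Prestack k 𝒰 A) where
  /-- the value `M^U(X, Y)` -/
  val : ∀ (U : 𝒰), A U → A U → Type w₂
  addCommGroup : ∀ U X Y, AddCommGroup (val U X Y)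
  module : ∀ U X Y, letI := addCommGroup U X Y; Module k (val U X Y)
  /-- left action: composition with a morphism on the target side -/
  actL : ∀ {U : 𝒰} {X Y Y' : A U}, (Y ⟶ Y') → val U X Y → val U X Y'
  /-- right action: composition with a morphism on the source side -/
  actR : ∀ {U : 𝒰} {X X' Y : A U}, val U X Y → (X' ⟶ X) → val U X' Y
  /-- restriction map `M^u : M^U(X,Y) → M^V(u^*X, u^*Y)` -/
  rst : ∀ {V U : 𝒰} (u : V ⟶ U) {X Y : A U}, val U X Y →
    val V ((𝒜.res u).obj X) ((𝒜.res u).obj Y)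
  actL_id : ∀ {U : 𝒰} {X Y : A U} (x : val U X Y), actL (𝟙 Y) x = x
  actL_actL : ∀ {U : 𝒰} {X Y Y' Y'' : A U} (f : Y ⟶ Y') (g : Y' ⟶ Y'') (x : val U X Y),
    actL g (actL f x) = actL (f ≫ g) x
  actR_id : ∀ {U : 𝒰} {X Y : A U} (x : val U X Y), actR x (𝟙 X) = x
  actR_actR : ∀ {U : 𝒰} {X X' X'' Y : A U} (f : X' ⟶ X) (g : X'' ⟶ X') (x : val U X Y),
    actR (actR x f) g = actR x (g ≫ f)
  actL_actR : ∀ {U : 𝒰} {X X' Y Y' : A U} (f : X' ⟶ X) (g : Y ⟶ Y') (x : val U X Y),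
    actL g (actR x f) = actR (actL g x) f
  actL_add : ∀ {U : 𝒰} {X Y Y' : A U} (g : Y ⟶ Y') (x y : val U X Y),
    letI := addCommGroup U X Y; letI := addCommGroup U X Y';
    actL g (x + y) = actL g x + actL g y
  add_actL : ∀ {U : 𝒰} {X Y Y' : A U} (g g' : Y ⟶ Y') (x : val U X Y),
    letI := addCommGroup U X Y';
    actL (g + g') x = actL g x + actL g' x
  actR_add : ∀ {U : 𝒰} {X X' Y : A U} (f : X' ⟶ X) (x y : val U X Y),
    letI := addCommGroup U X Y; letI := addCommGroup U X' Y;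
    actR (x + y) f = actR x f + actR y f
  add_actR : ∀ {U : 𝒰} {X X' Y : A U} (f f' : X' ⟶ X) (x : val U X Y),
    letI := addCommGroup U X' Y;
    actR x (f + f') = actR x f + actR x f'
  actL_smul : ∀ {U : 𝒰} {X Y Y' : A U} (c : k) (g : Y ⟶ Y') (x : val U X Y),
    letI := addCommGroup U X Y; letI := addCommGroup U X Y';
    letI := module U X Y; letI := module U X Y';
    actL g (c • x) = c • actL g x
  actR_smul : ∀ {U : 𝒰} {X X' Y : A U} (c : k) (f : X' ⟶ X) (x : val U X Y),
    letI := addCommGroup U X Y; letI := addCommGroup U X' Y;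
    letI := module U X Y; letI := module U X' Y;
    actR (c • x) f = c • actR x f
  rst_add : ∀ {V U : 𝒰} (u : V ⟶ U) {X Y : A U} (x y : val U X Y),
    letI := addCommGroup U X Y;
    letI := addCommGroup V ((𝒜.res u).obj X) ((𝒜.res u).obj Y);
    rst u (x + y) = rst u x + rst u y
  rst_actL : ∀ {V U : 𝒰} (u : V ⟶ U) {X Y Y' : A U} (g : Y ⟶ Y') (x : val U X Y),
    rst u (actL g x) = actL ((𝒜.res u).map g) (rst u x)
  rst_actR : ∀ {V U : 𝒰} (u : V ⟶ U) {X X' Y : A U} (f : X' ⟶ X) (x : val U X Y),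
    rst u (actR x f) = actR (rst u x) ((𝒜.res u).map f)
  rst_id : ∀ {U : 𝒰} {X Y : A U} (x : val U X Y), HEq (rst (𝟙 U) x) x
  rst_comp : ∀ {W V U : 𝒰} (v : W ⟶ V) (u : V ⟶ U) {X Y : A U} (x : val U X Y),
    rst (v ≫ u) x =
      actL ((𝒜.twist v u).hom.app Y) (actR (rst v (rst u x)) ((𝒜.twist v u).inv.app X))

attribute [instance] Bimodule.addCommGroup Bimodule.module

namespace Bimodule

variable {𝒜 : Prestack k 𝒰 A} (M : Bimodule 𝒜)

/-- transport a bimodule value along equalities of objects -/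
def castV {U : 𝒰} {X X' Y Y' : A U} (h₁ : X = X') (h₂ : Y = Y') (x : M.val U X Y) :
    M.val U X' Y' := h₁ ▸ h₂ ▸ x

end Bimodule

variable (𝒜 : Prestack k 𝒰 A) (M : Bimodule 𝒜)

/-- the component of the Gerstenhaber–Schack double object for a fixed simplex `σ`:
functions sending `q`-simplices of arguments in `A T` to values of `M`. -/
def CSigma {S T : 𝒰} {p : ℕ} (σ : Chain 𝒰 S T p) (q : ℕ) : Type _ :=
  ∀ (X Y : A T) (_ : Chain (A T) X Y q), M.val S ((σ.star 𝒜).obj X) ((σ.ast 𝒜).obj Y)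

/-- the Gerstenhaber–Schack double object `𝐂^{p,q}(𝒜, M)` -/
def Cpq (p q : ℕ) : Type _ :=
  ∀ (S T : 𝒰) (σ : Chain 𝒰 S T p), CSigma 𝒜 M σ q

instance {S T : 𝒰} {p : ℕ} (σ : Chain 𝒰 S T p) (q : ℕ) :
    AddCommGroup (CSigma 𝒜 M σ q) := by unfold CSigma; infer_instance

instance (p q : ℕ) : AddCommGroup (Cpq 𝒜 M p q) := by unfold Cpq; infer_instance

/-- the total Gerstenhaber–Schack object `𝐂ⁿ_GS(𝒜,M) = ∏_{p+q=n} 𝐂^{p,q}(𝒜,M)` -/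
def CGS (n : ℕ) : Type _ := ∀ pq : {x : ℕ × ℕ // x.1 + x.2 = n}, Cpq 𝒜 M pq.1.1 pq.1.2

instance (n : ℕ) : AddCommGroup (CGS 𝒜 M n) := by unfold CGS; infer_instance

/-- the Hochschild differential, on the `σ`-component -/
def dHochS {S T : 𝒰} {p : ℕ} (σ : Chain 𝒰 S T p) {q : ℕ} (φ : CSigma 𝒜 M σ q) :
    CSigma 𝒜 M σ (q + 1) := fun X Y a =>
  match a with
  | .cons f a' =>
      (M.actL ((σ.ast 𝒜).map (Chain.cons f a').initLast.2.2)
          (φ X (Chain.cons f a').initLast.1 (Chain.cons f a').initLast.2.1))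
      + (∑ j : Fin q, ((-1 : ℤ) ^ (q - j.val)) •
          φ X Y (Chain.cast' (show q - 1 + 1 = q by have := j.isLt; omega)
            ((Chain.cast' (show q + 1 = q - 1 + 2 by have := j.isLt; omega)
              (Chain.cons f a')).del j.val)))
      + ((-1 : ℤ) ^ (q + 1)) • M.actR (φ _ Y a') ((σ.star 𝒜).map f)

/-- the Hochschild differential `𝐂^{p,q} → 𝐂^{p,q+1}` -/
def dHoch {p q : ℕ} (φ : Cpq 𝒜 M p q) : Cpq 𝒜 M p (q + 1) :=
  fun S T σ => dHochS 𝒜 M σ (φ S T σ)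

/-- the (twisted) simplicial differential `𝐂^{p,q} → 𝐂^{p+1,q}` -/
def dSimp {p q : ℕ} (φ : Cpq 𝒜 M p q) : Cpq 𝒜 M (p + 1) q := fun S T σ X Y a =>
  match σ with
  | .cons u σ' =>
      -- i = 0 : `c^{σ,1} M^{u_1} φ^{∂_0 σ}(a)`
      let t0 : M.val S (((Chain.cons u σ').star 𝒜).obj X) (((Chain.cons u σ').ast 𝒜).obj Y) :=
        M.castV
          (rfl :
            (𝒜.res u).obj ((σ'.star 𝒜).obj X) = ((Chain.cons u σ').star 𝒜).obj X)
          ((congrArg (fun f => (𝒜.res f).obj Y) (Chain.comp_cons' u σ').symm :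
            (𝒜.res (u ≫ σ'.comp)).obj Y = ((Chain.cons u σ').ast 𝒜).obj Y))
          (M.actL ((𝒜.twist u σ'.comp).hom.app Y)
            (M.castV rfl
              ((congrArg (fun F => (𝒜.res u).obj (F.obj Y))
                  (Chain.res_comp_eq_ast 𝒜 σ').symm :
                (𝒜.res u).obj ((σ'.ast 𝒜).obj Y) = (𝒜.res σ'.comp ⋙ 𝒜.res u).obj Y))
              (M.rst u (φ _ T σ' X Y a))))
      -- 1 ≤ i ≤ p : `(-1)^i φ^{∂_i σ}(a) ∘ ε^{σ,i}`
      let t1 : M.val S (((Chain.cons u σ').star 𝒜).obj X) (((Chain.cons u σ').ast 𝒜).obj Y) :=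
        ∑ j : Fin p,
          let h1 : p + 1 = p - 1 + 2 := by have := j.isLt; omega
          let h2 : p - 1 + 1 = p := by have := j.isLt; omega
          let σc := Chain.cast' h1 (Chain.cons u σ')
          let σd := Chain.cast' h2 (σc.del j.val)
          ((-1 : ℤ) ^ (j.val + 1)) •
            (M.castV
              ((congrArg (fun F => F.obj X) (Chain.star_cast' 𝒜 h1 (Chain.cons u σ')) :
                (σc.star 𝒜).obj X = ((Chain.cons u σ').star 𝒜).obj X))
              ((congrArg (fun F => F.obj Y)
                  (show σd.ast 𝒜 = (Chain.cons u σ').ast 𝒜 by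
                    rw [Chain.ast_cast', Chain.ast_del, Chain.ast_cast']) :
                (σd.ast 𝒜).obj Y = ((Chain.cons u σ').ast 𝒜).obj Y))
              (M.actR (φ S T σd X Y a)
                ((σc.eps 𝒜 j.val).app X ≫
                  eqToHom ((congrArg (fun F => F.obj X)
                    (Chain.star_cast' 𝒜 h2 (σc.del j.val))).symm))))
      -- i = p+1 : `(-1)^{p+1} c^{σ,p} φ^{∂_{p+1} σ}(u_{p+1}^* a)`
      let t2 : M.val S (((Chain.cons u σ').star 𝒜).obj X) (((Chain.cons u σ').ast 𝒜).obj Y) :=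
        ((-1 : ℤ) ^ (p + 1)) •
          (M.castV
            ((Functor.congr_obj (Chain.star_init 𝒜 (Chain.cons u σ')) X).symm :
              ((𝒜.res (Chain.cons u σ').initLast.2.2 ⋙
                (Chain.cons u σ').initLast.2.1.star 𝒜).obj X) =
                ((Chain.cons u σ').star 𝒜).obj X)
            ((congrArg (fun f => (𝒜.res f).obj Y) (Chain.comp_init (Chain.cons u σ')) :
              (𝒜.res ((Chain.cons u σ').initLast.2.1.comp ≫
                (Chain.cons u σ').initLast.2.2)).obj Y = ((Chain.cons u σ').ast 𝒜).obj Y))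
            (M.actL
              ((𝒜.twist (Chain.cons u σ').initLast.2.1.comp
                  (Chain.cons u σ').initLast.2.2).hom.app Y)
              (M.castV rfl
                ((congrArg (fun F =>
                    F.obj ((𝒜.res (Chain.cons u σ').initLast.2.2).obj Y))
                    (Chain.res_comp_eq_ast 𝒜 (Chain.cons u σ').initLast.2.1).symm :
                  ((Chain.cons u σ').initLast.2.1.ast 𝒜).obj
                      ((𝒜.res (Chain.cons u σ').initLast.2.2).obj Y) =
                    (𝒜.res (Chain.cons u σ').initLast.2.2 ⋙
                      𝒜.res (Chain.cons u σ').initLast.2.1.comp).obj Y))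
                (φ S _ (Chain.cons u σ').initLast.2.1 _ _
                  (a.mapC (𝒜.res (Chain.cons u σ').initLast.2.2))))))
      t0 + t1 + t2

end CoreD
section CoreE

open CategoryTheory

variable {k : Type u₁} [CommRing k] {𝒰 : Type u₂} [Category.{v₁} 𝒰]
  {A : 𝒰 → Type w₁} [∀ U, Category.{w₂} (A U)] [∀ U, Preadditive (A U)]
  [∀ U, Linear k (A U)]

/-- a splitting of a simplex `σ` into a prefix `L_p σ` and a suffix `R_p σ`, together with
the relations between the corresponding functors. -/
structure Split (𝒜 : Prestack k 𝒰 A) {S T : 𝒰} {n : ℕ} (σ : Chain 𝒰 S T n) where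
  p : ℕ
  j : ℕ
  hpj : p + j = n
  W : 𝒰
  pre : Chain 𝒰 S W p
  suf : Chain 𝒰 W T j
  hstar : σ.star 𝒜 = suf.star 𝒜 ⋙ pre.star 𝒜
  hcomp : pre.comp ≫ suf.comp = σ.comp

namespace Chain

variable (𝒜 : Prestack k 𝒰 A)

/-- the list of all splittings of a simplex -/
def splits : ∀ {S T : 𝒰} {n : ℕ} (σ : Chain 𝒰 S T n), List (Split 𝒜 σ)
  | _, _, _, .nil U =>
      [⟨0, 0, rfl, U, .nil U, .nil U, rfl, by simp [Chain.comp]⟩]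
  | S, T, _, .cons (n := m) u ρ =>
      ⟨0, m + 1, by omega, S, .nil S, .cons u ρ, rfl, by
        simp [Chain.comp]⟩ ::
      (splits ρ).map (fun s =>
        ⟨s.p + 1, s.j, by have := s.hpj; omega, s.W, .cons u s.pre, s.suf, by
          have := s.hstar
          simp only [Chain.star] at this ⊢
          rw [this, Functor.assoc], by
          have := s.hcomp
          rw [Chain.comp_cons', Chain.comp_cons', Category.assoc, this]⟩)

end Chain

variable (𝒜 : Prestack k 𝒰 A) (M : Bimodule 𝒜)

/-- The term of the higher differential component `d_j` (`j = s.j ≥ 2`) corresponding to a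
splitting `s` of the target simplex `σ`: the sum over all paths `r` of `R_p σ` and all
shuffles `β` of the arguments with the path components (evaluated at objects) of
`(-1)^r (-1)^β (-1)^Q c^{σ,p} φ^{L_p σ}(β(a,r))`. -/
def higherTerm {n : ℕ} (φ : CGS 𝒜 M n) {P Q : ℕ} (hPQ : P + Q = n + 1)
    {S T : 𝒰} (σ : Chain 𝒰 S T P) (s : Split 𝒜 σ) {X Y : A T}
    (a : Chain (A T) X Y Q) (h2 : 2 ≤ s.j) :
    M.val S ((σ.star 𝒜).obj X) ((σ.ast 𝒜).obj Y) :=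
  let sufc := Chain.cast' (show s.j = s.j - 2 + 1 + 1 by omega) s.suf
  (((PathD.all sufc).map fun r =>
      (((Shuffle.all Q (s.j - 2 + 1)).map fun β =>
          let φv := φ ⟨(s.p, Q + (s.j - 2) + 1), by have := s.hpj; omega⟩ S s.W s.pre
            ((sufc.star 𝒜).obj X) ((r.toNT 𝒜).1.obj Y) (shEval β a (r.toNT 𝒜).2)
          (r.sign * β.sign * (-1 : ℤ) ^ Q) •
            M.castV
              (show (s.pre.star 𝒜).obj ((sufc.star 𝒜).obj X) = (σ.star 𝒜).obj X by
                rw [Chain.star_cast', s.hstar]; try rfl)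
              (show (𝒜.res (s.pre.comp ≫ sufc.comp)).obj Y = (σ.ast 𝒜).obj Y by
                rw [Chain.comp_cast', s.hcomp, Chain.res_comp_eq_ast]; try rfl)
              (M.actL ((𝒜.twist s.pre.comp sufc.comp).hom.app Y)
                (M.castV rfl
                  (show (s.pre.ast 𝒜).obj ((r.toNT 𝒜).1.obj Y) =
                      (𝒜.res sufc.comp ⋙ 𝒜.res s.pre.comp).obj Y by
                    rw [← Chain.res_comp_eq_ast, PathD.end_eq 𝒜 r]; try rfl)
                  φv))).sum)).sum)

/-- The Gerstenhaber–Schack differential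
`d = d_0 + d_1 + ⋯ : 𝐂ⁿ_GS(𝒜,M) → 𝐂ⁿ⁺¹_GS(𝒜,M)`, where `d_0 = d_Hoch` is the Hochschild
differential, `d_1 = (-1)^{n+1} d_simp` is the twisted simplicial differential, and the higher
components `d_j` (`j ≥ 2`) are given by `higherTerm` via paths and shuffles. -/
def dGSHoch (n : ℕ) (φ : CGS 𝒜 M n) : ∀ (P Q : ℕ), P + Q = n + 1 → Cpq 𝒜 M P Q
  | _, 0, _ => 0
  | P, (Q' + 1), h => fun S T σ => dHochS 𝒜 M σ (φ ⟨(P, Q'), by omega⟩ S T σ)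

def dGSSimp (n : ℕ) (φ : CGS 𝒜 M n) : ∀ (P Q : ℕ), P + Q = n + 1 → Cpq 𝒜 M P Q
  | 0, _, _ => 0
  | (P' + 1), Q, h => ((-1 : ℤ) ^ (n + 1)) • dSimp 𝒜 M (φ ⟨(P', Q), by omega⟩)

def dGS (n : ℕ) (φ : CGS 𝒜 M n) : CGS 𝒜 M (n + 1) := fun pq S T σ X Y a =>
  -- d₀ = d_Hoch
  dGSHoch 𝒜 M n φ pq.1.1 pq.1.2 pq.2 S T σ X Y a
  -- d₁ = (-1)ⁿ⁺¹ d_simp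
  + dGSSimp 𝒜 M n φ pq.1.1 pq.1.2 pq.2 S T σ X Y a
  -- d_j for j ≥ 2, via paths and shuffles
  + (((σ.splits 𝒜).map (fun s =>
      if h2 : 2 ≤ s.j then higherTerm 𝒜 M φ pq.2 σ s a h2 else 0)).sum)

end CoreE
section CoreF

open CategoryTheory

variable {k : Type u₁} [CommRing k] {𝒰 : Type u₂} [Category.{v₁} 𝒰]
  {A : 𝒰 → Type w₁} [∀ U, Category.{w₂} (A U)] [∀ U, Preadditive (A U)]
  [∀ U, Linear k (A U)]

variable (𝒜 : Prestack k 𝒰 A) (M : Bimodule 𝒜)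

/-- a cochain component is normalized if it vanishes on argument tuples containing an identity -/
def Normalized {p q : ℕ} (φ : Cpq 𝒜 M p q) : Prop :=
  ∀ (S T : 𝒰) (σ : Chain 𝒰 S T p) (X Y : A T) (a : Chain (A T) X Y q),
    a.HasId → φ S T σ X Y a = 0

/-- a total cochain is normalized -/
def NormalizedGS {n : ℕ} (φ : CGS 𝒜 M n) : Prop := ∀ pq, Normalized 𝒜 M (φ pq)

/-- a cochain component vanishes on right `kk`-degenerate simplices -/
def RightReduced (kk : ℕ) {p q : ℕ} (φ : Cpq 𝒜 M p q) : Prop :=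
  ∀ (S T : 𝒰) (σ : Chain 𝒰 S T p), σ.RightDeg kk →
    ∀ (X Y : A T) (a : Chain (A T) X Y q), φ S T σ X Y a = 0

/-- a total cochain vanishes on right `kk`-degenerate simplices -/
def RightReducedGS (kk : ℕ) {n : ℕ} (φ : CGS 𝒜 M n) : Prop :=
  ∀ pq, RightReduced 𝒜 M kk (φ pq)

/-- a cochain component is reduced: it vanishes on degenerate simplices -/
def Reduced {p q : ℕ} (φ : Cpq 𝒜 M p q) : Prop :=
  ∀ (S T : 𝒰) (σ : Chain 𝒰 S T p), σ.HasId →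
    ∀ (X Y : A T) (a : Chain (A T) X Y q), φ S T σ X Y a = 0

/-- a total cochain is reduced -/
def ReducedGS {n : ℕ} (φ : CGS 𝒜 M n) : Prop := ∀ pq, Reduced 𝒜 M (φ pq)

/-- membership in the filtration `F^j`: the components over simplices of dimension `≤ j`
are normalized -/
def NormalizedUpTo (j : ℕ) {n : ℕ} (φ : CGS 𝒜 M n) : Prop :=
  ∀ pq : {x : ℕ × ℕ // x.1 + x.2 = n}, pq.1.1 ≤ j → Normalized 𝒜 M (φ pq)

/-- The cohomology of the subcomplex of the Gerstenhaber–Schack complex cut out by the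
predicate `P` (as a bare quotient set: cocycles satisfying `P` modulo differentials of
cochains satisfying `P`). -/
def GSCohomology (P : ∀ n : ℕ, CGS 𝒜 M n → Prop) (n : ℕ) : Type _ :=
  Quot (fun (x y : {φ : CGS 𝒜 M n // P n φ ∧ dGS 𝒜 M n φ = 0}) =>
    ∃ (m : ℕ) (h : m + 1 = n) (ψ : CGS 𝒜 M m), P m ψ ∧ x.1 = y.1 + h ▸ dGS 𝒜 M m ψ)

/-- The statement that the inclusion of the subcomplex of the Gerstenhaber–Schack complex cut
out by `P'` into the one cut out by `P` is a quasi-isomorphism: the canonical map induced by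
the inclusion on cohomology is bijective in every degree. -/
def InclusionQuasiIso (P' P : ∀ n : ℕ, CGS 𝒜 M n → Prop) : Prop :=
  ∀ n : ℕ, ∃ F : GSCohomology 𝒜 M P' n → GSCohomology 𝒜 M P n,
    Function.Bijective F ∧
      ∀ (z : {φ : CGS 𝒜 M n // P' n φ ∧ dGS 𝒜 M n φ = 0})
        (w : {φ : CGS 𝒜 M n // P n φ ∧ dGS 𝒜 M n φ = 0}),
        z.1 = w.1 → F (Quot.mk _ z) = Quot.mk _ w

end CoreF

/-!
Every path composite equals the canonical composite `Chain.collapse σ : σ^⋆ ⟶ σ^*`, which first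
collapses `u_2, …, u_n` recursively and then twists `u_1` against their composite. By induction
on the path it suffices that `ε^{σ,i}` followed by the collapse of `∂_i σ` is the collapse of
`σ`. For `i = 0` this is the cocycle condition on the twists, after interchanging the two
whiskerings; for `i > 0` it is the statement for the tail of `σ`, whiskered by `u_1^*`.

The codomains `(∂_i σ)^*` and `σ^*` agree only propositionally, so these identities are
stated as heterogeneous equalities.
-/

section Collapse

open Functor

variable {k : Type u₁} [CommRing k] {𝒰 : Type u₂} [Category.{v₁} 𝒰]
  {A : 𝒰 → Type w₁} [∀ U, Category.{w₂} (A U)] [∀ U, Preadditive (A U)]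
  [∀ U, Linear k (A U)] (𝒜 : Prestack k 𝒰 A)

theorem Prestack.whiskerRight_comp_twist_hom_heq {W V U : 𝒰} {F : A U ⥤ A V} (u : W ⟶ V)
    {f g : V ⟶ U} (h : f = g) {α : F ⟶ 𝒜.res f} {β : F ⟶ 𝒜.res g} (hαβ : α ≍ β) :
    whiskerRight α (𝒜.res u) ≫ (𝒜.twist u f).hom ≍
      whiskerRight β (𝒜.res u) ≫ (𝒜.twist u g).hom := by
  subst h
  rw [eq_of_heq hαβ]

namespace Chain

def collapse : ∀ {S T : 𝒰} {n : ℕ} (σ : Chain 𝒰 S T (n + 1)), σ.star 𝒜 ⟶ 𝒜.res σ.comp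
  | _, _, _, .cons u (.nil _) => 𝟙 (𝒜.res u)
  | _, _, _, .cons u (.cons v σ) =>
      whiskerRight (collapse (.cons v σ)) (𝒜.res u) ≫ (𝒜.twist u (Chain.cons v σ).comp).hom

theorem collapse_cons_heq {S M T : 𝒰} {n : ℕ} (u : S ⟶ M) (σ : Chain 𝒰 M T (n + 1)) :
    (Chain.cons u σ).collapse 𝒜 ≍
      whiskerRight (σ.collapse 𝒜) (𝒜.res u) ≫ (𝒜.twist u σ.comp).hom := by
  cases σ
  rfl

theorem eps_comp_collapse_del_heq : ∀ {S T : 𝒰} {n : ℕ} (σ : Chain 𝒰 S T (n + 2)) (i : ℕ),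
    σ.eps 𝒜 i ≫ (σ.del i).collapse 𝒜 ≍ σ.collapse 𝒜
  | _, _, _, .cons u (.cons v (.nil _)), _ => by
      change (𝒜.twist u v).hom ≫ 𝟙 _ ≍ whiskerRight (𝟙 _) (𝒜.res u) ≫ (𝒜.twist u v).hom
      rw [whiskerRight_id', Category.comp_id]
      exact heq_of_eq (Category.id_comp _).symm
  | _, _, _, .cons u (.cons v (.cons w ρ)), 0 => by
      let c := (Chain.cons w ρ).comp
      let γ := (Chain.cons w ρ).collapse 𝒜
      have hcoh : whiskerLeft ((Chain.cons w ρ).star 𝒜) (𝒜.twist u v).hom ≫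
            whiskerRight γ (𝒜.res (u ≫ v)) ≫ (𝒜.twist (u ≫ v) c).hom =
          (whiskerRight (whiskerRight γ (𝒜.res v) ≫ (𝒜.twist v c).hom) (𝒜.res u) ≫
            (𝒜.twist u (v ≫ c)).hom) ≫ eqToHom (by rw [Category.assoc]) := by
        rw [whiskerLeft_comp_whiskerRight_assoc, 𝒜.coherence, whiskerRight_comp]
        simp only [Category.assoc]
        -- whiskering by `res v`, then by `res u`, is definitionally whiskering by `res v ⋙ res u`
        rfl
      exact (heq_of_eq hcoh).trans (comp_eqToHom_heq _ _)
  | _, _, _, .cons u (.cons v (.cons w ρ)), i + 1 => by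
      let τ := Chain.cons v (.cons w ρ)
      refine (heq_comp rfl rfl (congrArg 𝒜.res (comp_cons' u (τ.del i))) HEq.rfl
        (collapse_cons_heq 𝒜 u _)).trans ?_
      refine (heq_of_eq (whiskerRight_comp_assoc _ _ _ _).symm).trans ?_
      exact 𝒜.whiskerRight_comp_twist_hom_heq u (comp_del τ i) (eps_comp_collapse_del_heq τ i)

end Chain

theorem PathD.toNT_snd_comp_heq_collapse :
    ∀ {S T : 𝒰} {n : ℕ} {σ : Chain 𝒰 S T (n + 1)} (r : PathD σ),
      (r.toNT 𝒜).2.comp ≍ σ.collapse 𝒜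
  | _, _, _, _, .one (.cons u (.nil _)) => HEq.rfl
  | _, _, _, _, .base (.cons u (.cons v (.nil _))) => by
      change (𝒜.twist u v).hom ≍ whiskerRight (𝟙 _) (𝒜.res u) ≫ (𝒜.twist u v).hom
      rw [whiskerRight_id', Category.id_comp]
  | _, _, _, _, .step σ i r => by
      rw [PathD.toNT, Chain.comp_cons']
      exact (heq_comp rfl rfl (by rw [r.end_eq 𝒜, Chain.comp_del]) HEq.rfl
        (toNT_snd_comp_heq_collapse r)).trans (σ.eps_comp_collapse_del_heq 𝒜 i)

end Collapse

open CategoryTheory in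
/-- **Statement 3.** For any two paths `r, s ∈ 𝒫(u_1,…,u_n)` of an `n`-simplex `σ` (`n ≥ 2`)
in the nerve of `𝒰`, the composite natural transformations agree: `‖r‖ = ‖s‖`
(the endpoints agree, and modulo the induced identification the composites are equal). -/
theorem path_composites_agree
    {k : Type u₁} [CommRing k] {𝒰 : Type u₂} [Category.{v₁} 𝒰]
    {A : 𝒰 → Type w₁} [∀ U, Category.{w₂} (A U)] [∀ U, Preadditive (A U)]
    [∀ U, Linear k (A U)] (𝒜 : Prestack k 𝒰 A)
    {S T : 𝒰} {n : ℕ} (σ : Chain 𝒰 S T (n + 2)) (r s : PathD σ) :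
    ∃ h : (r.toNT 𝒜).1 = (s.toNT 𝒜).1,
      (r.toNT 𝒜).2.comp ≫ eqToHom h = (s.toNT 𝒜).2.comp :=
  ⟨(r.end_eq 𝒜).trans (s.end_eq 𝒜).symm, eq_of_heq <| (comp_eqToHom_heq _ _).trans <|
    (r.toNT_snd_comp_heq_collapse 𝒜).trans (s.toNT_snd_comp_heq_collapse 𝒜).symm⟩
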